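/- Let U be a vector space over ℂ, z a nonzero complex number, k a nonnegative integer, and let f(x) = ∑_{n∈ℤ} f_n x^{-n-1} and g(x) = ∑_{n∈ℤ} g_n x^{-n-1} be formal Laurent series with coefficients in U. Suppose f(x) ∈ U((x^{-1})) (only finitely many positive powers of x appear) and (x-z)^k f(x) = (x-z)^k g(x). Then for every n ∈ ℤ, the coefficient f_n lies in the linear span of {g_m | m ≤ n+k}. -/

import Mathlib

/-!
Because `(x - z)^k` has leading coefficient `1`, the relation expresses `fₙ` as `gₙ` plus a linear
combination of `g_{n-i}` and `f_{n-i}` for `1 ≤ i ≤ k`. Since `f` vanishes far down, induction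
upward in `n` gives the stronger statement `fₙ ∈ span {g_m | m ≤ n}`.
-/

open Finset

section

variable {R M : Type*} [Ring R] [AddCommGroup M] [Module R M]

theorem mem_of_sum_smul_eq_sum_smul {p : Submodule R M} {c : ℕ → R} (hc : c 0 = 1) {k : ℕ}
    {f g : ℤ → M} {n : ℤ}
    (hfg : ∑ i ∈ range (k + 1), c i • f (n - i) = ∑ i ∈ range (k + 1), c i • g (n - i))
    (hg : ∀ i ≤ k, g (n - i) ∈ p) (hf : ∀ i < k, f (n - (i + 1 : ℕ)) ∈ p) : f n ∈ p := by
  rw [sum_range_succ', hc, Nat.cast_zero, sub_zero, one_smul] at hfg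
  have hfn : f n = ∑ i ∈ range (k + 1), c i • g (n - i)
      - ∑ i ∈ range k, c (i + 1) • f (n - (i + 1 : ℕ)) := by
    rw [← hfg, add_sub_cancel_left]
  rw [hfn]
  refine sub_mem (sum_mem fun i hi => p.smul_mem _ (hg i ?_))
    (sum_mem fun i hi => p.smul_mem _ (hf i (mem_range.1 hi)))
  exact Nat.lt_succ_iff.1 (mem_range.1 hi)

theorem mem_span_image_Iic_of_sum_smul_eq {c : ℕ → R} (hc : c 0 = 1) {k : ℕ} {f g : ℤ → M}
    (hf : ∃ N, ∀ n ≤ N, f n = 0)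
    (hfg : ∀ n, ∑ i ∈ range (k + 1), c i • f (n - i) = ∑ i ∈ range (k + 1), c i • g (n - i))
    (n : ℤ) : f n ∈ Submodule.span R (g '' Set.Iic n) := by
  obtain ⟨N, hN⟩ := hf
  have upto : ∀ n, N ≤ n → ∀ m ≤ n, f m ∈ Submodule.span R (g '' Set.Iic m) := by
    refine Int.leInduction (fun m hm => by simp [hN m hm]) fun n _ ih m hm => ?_
    rcases hm.lt_or_eq with hm | rfl
    · exact ih m (Int.lt_add_one_iff.1 hm)
    refine mem_of_sum_smul_eq_sum_smul hc (hfg (n + 1))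
      (fun i _ => Submodule.subset_span ⟨_, by simp, rfl⟩) fun i _ => ?_
    refine Submodule.span_mono (Set.image_mono (Set.Iic_subset_Iic.2 ?_)) (ih _ ?_) <;> omega
  exact upto (max N n) (le_max_left _ _) n (le_max_right _ _)

end

theorem stmt1_general (U : Type*) [AddCommGroup U] [Module ℂ U] (z : ℂ) (k : ℕ)
    (f g : ℤ → U)
    (hf : ∃ N : ℤ, ∀ n ≤ N, f n = 0)
    (hfg : ∀ n : ℤ,
      ∑ i ∈ Finset.range (k + 1), ((k.choose i : ℂ) * (-z) ^ i) • f (n + k - i)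
        = ∑ i ∈ Finset.range (k + 1), ((k.choose i : ℂ) * (-z) ^ i) • g (n + k - i)) :
    ∀ n : ℤ, f n ∈ Submodule.span ℂ (g '' {m : ℤ | m ≤ n + k}) := by
  intro n
  have hfg' : ∀ n : ℤ, ∑ i ∈ range (k + 1), ((k.choose i : ℂ) * (-z) ^ i) • f (n - i)
      = ∑ i ∈ range (k + 1), ((k.choose i : ℂ) * (-z) ^ i) • g (n - i) := fun n => by
    simpa only [sub_add_cancel] using hfg (n - k)
  refine Submodule.span_mono (Set.image_mono fun m (hm : m ≤ n) => ?_)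
    (mem_span_image_Iic_of_sum_smul_eq (by simp) hf hfg' n)
  change m ≤ n + k
  omega

/-- If `f(x) = ∑ₙ fₙ x^{-n-1} ∈ U((x⁻¹))` (only finitely many positive powers
of `x`, i.e. `fₙ = 0` for `n` sufficiently small) and `(x-z)^k f(x) = (x-z)^k g(x)`, then
each `fₙ` lies in the span of `{g_m | m ≤ n + k}`. -/
theorem stmt1 (U : Type*) [AddCommGroup U] [Module ℂ U] (z : ℂ) (hz : z ≠ 0) (k : ℕ)
    (f g : ℤ → U)
    (hf : ∃ N : ℤ, ∀ n ≤ N, f n = 0)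
    (hfg : ∀ n : ℤ,
      ∑ i ∈ Finset.range (k + 1), ((k.choose i : ℂ) * (-z) ^ i) • f (n + k - i)
        = ∑ i ∈ Finset.range (k + 1), ((k.choose i : ℂ) * (-z) ^ i) • g (n + k - i)) :
    ∀ n : ℤ, f n ∈ Submodule.span ℂ (g '' {m : ℤ | m ≤ n + k}) :=
  stmt1_general U z k f g hf hfg
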